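/- arXiv:2305.08966 — 9 statements merged into one kernel-verified Lean document; each statement's English description precedes it below -/
import Mathlib

section
/- For every even natural number k ≥ 0, there exist rational numbers a and b such that I_k = ∫₀^{π/2} x·cos^k(x) dx = a·π² + b. -/
/-! Since `sin² = 1 - cos²`, the function `x * cos x ^ (m + 1) * sin x + cos x ^ (m + 2) / (m + 2)`
is an antiderivative of `(m + 2) x cos^{m+2} x - (m + 1) x cos^m x`; evaluating it at `0` and `π / 2`
gives `(m + 2) I_{m+2} = (m + 1) I_m - 1 / (m + 2)`, an affine relation with rational
coefficients. Starting from `I_0 = π² / 8`, every even-indexed `I_k` is therefore a rational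
combination of `π²` and `1`. -/

open Real intervalIntegral

lemma hasDerivAt_mul_cos_pow_mul_sin_add_cos_pow (m : ℕ) (x : ℝ) :
    HasDerivAt (fun x => x * cos x ^ (m + 1) * sin x + cos x ^ (m + 2) / (m + 2))
      ((m + 2) * (x * cos x ^ (m + 2)) - (m + 1) * (x * cos x ^ m)) x := by
  refine ((((hasDerivAt_id' x).fun_mul ((hasDerivAt_cos x).fun_pow (m + 1))).fun_mul
    (hasDerivAt_sin x)).fun_add (((hasDerivAt_cos x).fun_pow (m + 2)).div_const _)).congr_deriv ?_
  have hm : (m : ℝ) + 2 ≠ 0 := by positivity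
  push_cast
  field_simp
  linear_combination (-((m : ℝ) + 1) * x * cos x ^ m) * sin_sq_add_cos_sq x

theorem integral_mul_cos_pow_add_two (m : ℕ) :
    ∫ x in 0..π / 2, x * cos x ^ (m + 2) =
      ((m + 1) * (∫ x in 0..π / 2, x * cos x ^ m) - 1 / (m + 2)) / (m + 2) := by
  have hm : (m : ℝ) + 2 ≠ 0 := by positivity
  have hFTC := integral_eq_sub_of_hasDerivAt (a := 0) (b := π / 2)
    (fun x _ => hasDerivAt_mul_cos_pow_mul_sin_add_cos_pow m x)
    (by apply Continuous.intervalIntegrable; fun_prop)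
  have hint : ∀ n : ℕ, IntervalIntegrable (fun x => x * cos x ^ n) MeasureTheory.volume 0 (π / 2) :=
    fun n => by apply Continuous.intervalIntegrable; fun_prop
  rw [integral_sub ((hint _).const_mul _) ((hint _).const_mul _), integral_const_mul,
    integral_const_mul] at hFTC
  simp only [cos_pi_div_two, sin_pi_div_two, cos_zero, sin_zero, zero_pow (Nat.succ_ne_zero _),
    mul_zero, zero_div, add_zero, one_pow, zero_mul, zero_add, zero_sub] at hFTC
  field_simp at hFTC ⊢
  linear_combination hFTC

theorem exists_rat_integral_mul_cos_pow_two_mul (n : ℕ) :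
    ∃ a b : ℚ, ∫ x in 0..π / 2, x * cos x ^ (2 * n) = a * π ^ 2 + b := by
  induction n with
  | zero => exact ⟨1 / 8, 0, by simp only [mul_zero, pow_zero, mul_one, integral_id]; push_cast; ring⟩
  | succ n ih =>
    obtain ⟨a, b, h⟩ := ih
    refine ⟨(2 * n + 1) * a / (2 * n + 2), ((2 * n + 1) * b - 1 / (2 * n + 2)) / (2 * n + 2), ?_⟩
    rw [mul_add_one, integral_mul_cos_pow_add_two, h]
    push_cast
    ring

theorem stmt_2 (k : ℕ) (hk : Even k) :
    ∃ a b : ℚ, ∫ x in (0:ℝ)..(π/2), x * cos x ^ k = (a:ℝ) * π^2 + (b:ℝ) := by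
  obtain ⟨n, rfl⟩ := hk
  rw [← two_mul]
  exact exists_rat_integral_mul_cos_pow_two_mul n
end

section
/- For every natural number n ≥ 1, I_{2n} = ∫₀^{π/2} x·cos^{2n}(x) dx = (1/4)·W_{2n}·( π − (2/π)·∑_{j=1}^{n} (1/j²)·((2j)!!/(2j−1)!!) ), where W_{2n} = ∫₀^{π/2} cos^{2n}(x) dx. -/
/-!
Integrating `x cos^(k+2) x` by parts twice gives `(k+2) I_(k+2) = (k+1) I_k - 1/(k+2)`, while
`W_(k+2) = (k+1)/(k+2) W_k`. Hence, from `n` to `n+1`, the identity is propagated up to the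
correction `1/(2n+2)^2`, and the Wallis formula `W_(2m) (2m)‼/(2m-1)‼ = π/2` rewrites this
correction as the new summand. The case `n = 0` is `I_0 = π²/8 = (π/4) W_0`.
-/

open Real Nat intervalIntegral

lemma hasDerivAt_mul_cos_pow_mul_sin_add_cos_pow_div (k : ℕ) (x : ℝ) :
    HasDerivAt (fun x => x * cos x ^ (k + 1) * sin x + cos x ^ (k + 2) / (k + 2))
      ((k + 2) * (x * cos x ^ (k + 2)) - (k + 1) * (x * cos x ^ k)) x := by
  have hF : HasDerivAt (fun x => x * cos x ^ (k + 1) * sin x + cos x ^ (k + 2) / (k + 2)) _ x :=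
    (((hasDerivAt_id x).mul ((hasDerivAt_cos x).pow (k + 1))).mul (hasDerivAt_sin x)).add
      (((hasDerivAt_cos x).pow (k + 2)).div_const ((k : ℝ) + 2))
  convert hF using 1
  have hk : (k : ℝ) + 2 ≠ 0 := by positivity
  simp only [Pi.mul_apply, Pi.pow_apply, id_eq, Nat.add_sub_cancel, Nat.cast_add, Nat.cast_ofNat,
    Nat.cast_one, show k + 2 - 1 = k + 1 by omega]
  field_simp
  linear_combination (x * (k + 1) * cos x ^ k) * sin_sq x

lemma integral_zero_pi_div_two_mul_cos_pow_add_two (k : ℕ) :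
    ((k : ℝ) + 2) * ∫ x in 0..π / 2, x * cos x ^ (k + 2) =
      (k + 1) * (∫ x in 0..π / 2, x * cos x ^ k) - 1 / (k + 2) := by
  have hFTC := integral_eq_sub_of_hasDerivAt (a := 0) (b := π / 2)
    (fun x _ => hasDerivAt_mul_cos_pow_mul_sin_add_cos_pow_div k x)
    (by apply Continuous.intervalIntegrable; fun_prop)
  rw [integral_sub, integral_const_mul, integral_const_mul] at hFTC
  · simp [cos_pi_div_two] at hFTC
    linear_combination hFTC
  all_goals apply Continuous.intervalIntegrable; fun_prop

lemma integral_zero_pi_div_two_cos_pow_add_two (k : ℕ) :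
    ∫ x in 0..π / 2, cos x ^ (k + 2) = (k + 1) / (k + 2) * ∫ x in 0..π / 2, cos x ^ k := by
  simp [integral_cos_pow]

lemma doubleFactorial_two_mul_succ_div (m : ℕ) :
    ((2 * (m + 1))‼ : ℝ) / (2 * (m + 1) - 1)‼ =
      (2 * m + 2) / (2 * m + 1) * ((2 * m)‼ / (2 * m - 1)‼) := by
  rw [show 2 * (m + 1) = 2 * m + 1 + 1 by ring, Nat.add_sub_cancel, add_assoc,
    doubleFactorial_add_two, doubleFactorial_add_one]
  push_cast
  have : ((2 * m - 1)‼ : ℝ) ≠ 0 := by positivity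
  field_simp

lemma integral_cos_pow_two_mul_mul_doubleFactorial_div (m : ℕ) :
    (∫ x in 0..π / 2, cos x ^ (2 * m)) * ((2 * m)‼ / (2 * m - 1)‼) = π / 2 := by
  induction m with
  | zero => simp
  | succ m ih =>
    rw [doubleFactorial_two_mul_succ_div, mul_add_one, integral_zero_pi_div_two_cos_pow_add_two]
    refine (?_ : _ = _).trans ih
    have : (2 * m + 1 : ℝ) ≠ 0 := by positivity
    have : (2 * m + 2 : ℝ) ≠ 0 := by positivity
    push_cast
    field_simp

theorem stmt_6_general (n : ℕ) :
    ∫ x in (0:ℝ)..(π/2), x * cos x ^ (2 * n) =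
      (1/4) * (∫ x in (0:ℝ)..(π/2), cos x ^ (2 * n)) *
        (π - (2 / π) *
          ∑ j ∈ Finset.Icc 1 n, (1 / (j:ℝ)^2) * (((2*j)‼ : ℝ) / ((2*j - 1)‼ : ℝ))) := by
  induction n with
  | zero => simp [integral_id]; ring
  | succ n ih =>
    have hI := integral_zero_pi_div_two_mul_cos_pow_add_two (2 * n)
    have hW := integral_zero_pi_div_two_cos_pow_add_two (2 * n)
    have hWallis := integral_cos_pow_two_mul_mul_doubleFactorial_div (n + 1)
    rw [Finset.sum_Icc_succ_top (by omega)]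
    set r : ℝ := (2 * (n + 1))‼ / (2 * (n + 1) - 1)‼
    rw [mul_add_one] at hWallis ⊢
    set I := ∫ x in 0..π / 2, x * cos x ^ (2 * n)
    set I' := ∫ x in 0..π / 2, x * cos x ^ (2 * n + 2)
    set W' := ∫ x in 0..π / 2, cos x ^ (2 * n + 2)
    set S := ∑ j ∈ Finset.Icc 1 n, (1 / (j : ℝ) ^ 2) * (((2 * j)‼ : ℝ) / ((2 * j - 1)‼ : ℝ))
    push_cast at hI hW ⊢
    have hn : (2 * n + 2 : ℝ) ≠ 0 := by positivity
    calc I' = ((2 * n + 1) * I - 1 / (2 * n + 2)) / (2 * n + 2) := by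
          rw [← hI, mul_div_cancel_left₀ _ hn]
      _ = 1 / 4 * W' * (π - 2 / π * S) - 1 / (2 * n + 2) ^ 2 := by
          rw [ih, hW]
          field_simp
      _ = 1 / 4 * W' * (π - 2 / π * S) - 1 / 4 * (2 / π) * (1 / (n + 1) ^ 2) * (W' * r) := by
          rw [hWallis]
          field_simp
          ring
      _ = 1 / 4 * W' * (π - 2 / π * (S + 1 / (n + 1) ^ 2 * r)) := by ring

theorem stmt_6 (n : ℕ) (hn : 1 ≤ n) :
    ∫ x in (0:ℝ)..(π/2), x * cos x ^ (2 * n) =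
      (1/4) * (∫ x in (0:ℝ)..(π/2), cos x ^ (2 * n)) *
        (π - (2 / π) *
          ∑ j ∈ Finset.Icc 1 n, (1 / (j:ℝ)^2) * (((2*j)‼ : ℝ) / ((2*j - 1)‼ : ℝ))) :=
  stmt_6_general n
end

section
/- For every even natural number k ≥ 0, J_k = ∫₀^{π/2} x·cos^k(2x) dx = (π/4)·W_k, where W_k = ∫₀^{π/2} cos^k(x) dx. -/
/-!
Both integrands are symmetric: `cos (2x) ^ k` under `x ↦ π/2 - x` and `cos x ^ k` under
`x ↦ π - x`, because `k` is even. The first symmetry lets the weight `x` be replaced by its mean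
`π/4`; the second, after substituting `2x`, identifies `∫₀^{π/2} cos (2x) ^ k` with `W_k`.
-/

open Real

section Symmetric

variable {E : Type*} [NormedAddCommGroup E] [NormedSpace ℝ E] {f : ℝ → E} {a b : ℝ}

/-- Substituting `x ↦ a + b - x` and averaging the two forms of the integral replaces `x` by
its mean `(a + b) / 2`. -/
theorem intervalIntegral.integral_smul_eq_midpoint_smul_of_symm
    (hf : IntervalIntegrable f MeasureTheory.volume a b) (hsymm : ∀ x, f (a + b - x) = f x) :
    ∫ x in a..b, x • f x = ((a + b) / 2) • ∫ x in a..b, f x := by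
  have hreflect : ∫ x in a..b, x • f x = ∫ x in a..b, (a + b - x) • f x := by
    have h := intervalIntegral.integral_comp_sub_left (fun x => x • f x) (a := a) (b := b) (a + b)
    simp only [hsymm, add_sub_cancel_right, add_sub_cancel_left] at h
    exact h.symm
  have hid : IntervalIntegrable (fun x => x • f x) MeasureTheory.volume a b :=
    hf.continuousOn_smul continuousOn_id
  have hreflected : IntervalIntegrable (fun x => (a + b - x) • f x) MeasureTheory.volume a b :=
    hf.continuousOn_smul (by fun_prop)
  have hsum : (∫ x in a..b, x • f x) + ∫ x in a..b, (a + b - x) • f x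
      = (a + b) • ∫ x in a..b, f x := by
    rw [← intervalIntegral.integral_add hid hreflected, ← intervalIntegral.integral_smul]
    congr 1 with x
    rw [← add_smul, add_sub_cancel]
  rw [← hreflect, ← two_smul ℝ] at hsum
  rw [div_eq_inv_mul, mul_smul, ← hsum, smul_smul, inv_mul_cancel₀ two_ne_zero, one_smul]

theorem intervalIntegral.integral_eq_two_smul_integral_half_of_symm
    (hf : IntervalIntegrable f MeasureTheory.volume a b) (hsymm : ∀ x, f (a + b - x) = f x) :
    ∫ x in a..b, f x = (2 : ℝ) • ∫ x in a..(a + b) / 2, f x := by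
  have hmem : (a + b) / 2 ∈ Set.uIcc a b := by
    rcases le_total a b with h | h
    · exact Set.mem_uIcc_of_le (by linarith) (by linarith)
    · exact Set.mem_uIcc_of_ge (by linarith) (by linarith)
  have hupper : ∫ x in (a + b) / 2..b, f x = ∫ x in a..(a + b) / 2, f x := by
    have h := intervalIntegral.integral_comp_sub_left f (a := a) (b := (a + b) / 2) (a + b)
    rw [show a + b - (a + b) / 2 = (a + b) / 2 by ring, add_sub_cancel_left] at h
    simp only [hsymm] at h
    exact h.symm
  rw [← intervalIntegral.integral_add_adjacent_intervals (b := (a + b) / 2)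
    (hf.mono_set (Set.uIcc_subset_uIcc_left hmem))
    (hf.mono_set (Set.uIcc_subset_uIcc_right hmem)), hupper, two_smul]

end Symmetric

theorem Even.integral_cos_two_mul_pow {k : ℕ} (hk : Even k) :
    ∫ x in (0:ℝ)..π / 2, cos (2 * x) ^ k = ∫ x in (0:ℝ)..π / 2, cos x ^ k := by
  have hsymm : ∀ x, cos (0 + π - x) ^ k = cos x ^ k := fun x => by
    rw [zero_add, cos_pi_sub, hk.neg_pow]
  have hhalf := intervalIntegral.integral_eq_two_smul_integral_half_of_symm (f := fun x => cos x ^ k)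
    ((continuous_cos.pow k).intervalIntegrable 0 π) hsymm
  rw [intervalIntegral.integral_comp_mul_left (fun x => cos x ^ k) two_ne_zero,
    mul_zero, show (2 : ℝ) * (π / 2) = π by ring, hhalf, zero_add, smul_smul,
    inv_mul_cancel₀ two_ne_zero, one_smul]

theorem stmt_9 (k : ℕ) (hk : Even k) :
    ∫ x in (0:ℝ)..(π/2), x * cos (2*x) ^ k =
      (π/4) * ∫ x in (0:ℝ)..(π/2), cos x ^ k := by
  have hsymm : ∀ x, cos (2 * (0 + π / 2 - x)) ^ k = cos (2 * x) ^ k := fun x => by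
    rw [show 2 * (0 + π / 2 - x) = π - 2 * x by ring, cos_pi_sub, hk.neg_pow]
  have hking := intervalIntegral.integral_smul_eq_midpoint_smul_of_symm
    ((by fun_prop : Continuous fun x => cos (2 * x) ^ k).intervalIntegrable 0 (π / 2)) hsymm
  simp only [smul_eq_mul] at hking
  rw [hking, hk.integral_cos_two_mul_pow]
  ring
end

section
/- For every natural number n ≥ 0, J_{2n} = ∫₀^{π/2} x·cos^{2n}(2x) dx = ((2n−1)!!/(2n)!!)·(π²/8). -/
/-!
The integrand is invariant under `x ↦ π/2 - x` except for the factor `x`, so averaging the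
integral with its reflection replaces `x` by `π/4`. After `u = 2x`, the integral of `cos^{2n}` over
`[0, π]` equals that of `sin^{2n}` (a shift by `π/2` of a `π`-periodic function), which is
Wallis' integral `π (2n-1)!!/(2n)!!`.
-/

open Real Nat

namespace intervalIntegral

theorem integral_id_mul_of_symmetric {f : ℝ → ℝ} {a b : ℝ}
    (hf : IntervalIntegrable f MeasureTheory.volume a b) (hsymm : ∀ x, f (a + b - x) = f x) :
    ∫ x in a..b, x * f x = (a + b) / 2 * ∫ x in a..b, f x := by
  have hid : IntervalIntegrable (fun x => x * f x) MeasureTheory.volume a b :=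
    hf.continuousOn_mul continuousOn_id
  have hreflected : IntervalIntegrable (fun x => (a + b - x) * f x) MeasureTheory.volume a b :=
    hf.continuousOn_mul (by fun_prop)
  have hreflect : ∫ x in a..b, (a + b - x) * f x = ∫ x in a..b, x * f x := by
    simpa only [hsymm, add_sub_cancel_right, add_sub_cancel_left] using
      integral_comp_sub_left (a := a) (b := b) (fun x => x * f x) (a + b)
  have hsum : (∫ x in a..b, (a + b - x) * f x) + ∫ x in a..b, x * f x =
      (a + b) * ∫ x in a..b, f x := by
    rw [← integral_add hreflected hid, ← integral_const_mul]
    congr 1 with x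
    ring
  linarith

end intervalIntegral

open intervalIntegral

theorem integral_cos_pow_even_eq_integral_sin_pow_even (n : ℕ) :
    ∫ x in (0:ℝ)..π, cos x ^ (2 * n) = ∫ x in (0:ℝ)..π, sin x ^ (2 * n) := by
  have hper : Function.Periodic (fun x => sin x ^ (2 * n)) π := fun x => by
    simp only [sin_antiperiodic x, neg_pow, (even_two_mul n).neg_one_pow, one_mul]
  calc ∫ x in (0:ℝ)..π, cos x ^ (2 * n)
      = ∫ x in (0:ℝ)..π, sin (x + π / 2) ^ (2 * n) := by simp only [sin_add_pi_div_two]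
    _ = ∫ x in π / 2..π / 2 + π, sin x ^ (2 * n) := by
      rw [integral_comp_add_right (fun x => sin x ^ (2 * n)), zero_add, add_comm]
    _ = ∫ x in (0:ℝ)..0 + π, sin x ^ (2 * n) := hper.intervalIntegral_add_eq _ _
    _ = ∫ x in (0:ℝ)..π, sin x ^ (2 * n) := by rw [zero_add]

theorem prod_range_odd_div_even_eq_doubleFactorial (n : ℕ) :
    ∏ i ∈ Finset.range n, (2 * (i : ℝ) + 1) / (2 * i + 2) =
      ((2 * n - 1)‼ : ℝ) / ((2 * n)‼ : ℝ) := by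
  induction n with
  | zero => simp
  | succ k ih =>
    rw [Finset.prod_range_succ, ih, show 2 * (k + 1) - 1 = 2 * k + 1 by omega, mul_add_one,
      doubleFactorial_add_one, doubleFactorial_add_two]
    have hodd : ((2 * k - 1)‼ : ℝ) ≠ 0 := by positivity [doubleFactorial_pos (2 * k - 1)]
    have heven : ((2 * k)‼ : ℝ) ≠ 0 := by positivity [doubleFactorial_pos (2 * k)]
    push_cast
    field_simp

theorem stmt_10 (n : ℕ) :
    ∫ x in (0:ℝ)..(π/2), x * cos (2*x) ^ (2*n) =
      (((2*n - 1)‼ : ℝ) / ((2*n)‼ : ℝ)) * (π^2 / 8) := by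
  have hsymm (x : ℝ) : cos (2 * (0 + π / 2 - x)) ^ (2 * n) = cos (2 * x) ^ (2 * n) := by
    rw [show 2 * (0 + π / 2 - x) = π - 2 * x by ring, cos_pi_sub, neg_pow,
      (even_two_mul n).neg_one_pow, one_mul]
  have hsubst : ∫ x in (0:ℝ)..(π/2), cos (2 * x) ^ (2 * n) =
      1 / 2 * ∫ x in (0:ℝ)..π, cos x ^ (2 * n) := by
    rw [integral_comp_mul_left (fun x => cos x ^ (2 * n)) two_ne_zero, mul_zero,
      mul_div_cancel₀ π two_ne_zero, smul_eq_mul, one_div]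
  rw [integral_id_mul_of_symmetric (Continuous.intervalIntegrable (by fun_prop) _ _) hsymm, hsubst,
    integral_cos_pow_even_eq_integral_sin_pow_even, integral_sin_pow_even,
    prod_range_odd_div_even_eq_doubleFactorial]
  ring
end

section
/- For every odd natural number k ≥ 1, J_k = ∫₀^{π/2} x·cos^k(2x) dx = (1/2)·I_k − ((k−1)!!/k!!)·(π/4), where I_k = ∫₀^{π/2} x·cos^k(x) dx. -/
/-! Substituting `u = 2x` turns `J_k` into `(1/4) ∫₀^π u cos^k u`. On `[π/2, π]` the reflection
`u ↦ π - u` and `cos (π - u) = -cos u` (with `k` odd) give `I_k - π ∫₀^{π/2} cos^k`, so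
`J_k = I_k / 2 - (π/4) ∫₀^{π/2} cos^k`, and the last integral is Wallis' `(k-1)‼/k‼`. -/

open Real Nat

theorem integral_cos_pow_odd_eq_doubleFactorial (n : ℕ) :
    ∫ x in (0:ℝ)..(π/2), cos x ^ (2*n+1) = ((2*n)‼ : ℝ) / ((2*n+1)‼ : ℝ) := by
  induction n with
  | zero => simp
  | succ n ih =>
    rw [show 2*(n+1)+1 = (2*n+1) + 2 by ring, integral_cos_pow, ih, cos_pi_div_two, sin_zero,
      show 2*(n+1) = 2*n + 2 by ring, Nat.doubleFactorial_add_two, Nat.doubleFactorial_add_two]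
    push_cast
    field_simp
    ring

theorem intervalIntegral.integral_mul_comp_mul_left (f : ℝ → ℝ) {c : ℝ} (hc : c ≠ 0)
    (a b : ℝ) :
    ∫ x in a..b, x * f (c * x) = (c ^ 2)⁻¹ * ∫ u in c*a..c*b, u * f u := by
  calc ∫ x in a..b, x * f (c * x) = c⁻¹ * ∫ x in a..b, (c * x) * f (c * x) := by
        rw [← intervalIntegral.integral_const_mul]
        congr 1 with x
        field_simp
    _ = (c ^ 2)⁻¹ * ∫ u in c*a..c*b, u * f u := by
        rw [intervalIntegral.integral_comp_mul_left (fun u => u * f u) hc, smul_eq_mul]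
        ring

theorem integral_mul_cos_pow_odd_pi_div_two_pi {k : ℕ} (hk : Odd k) :
    ∫ u in (π/2)..π, u * cos u ^ k =
      (∫ u in (0:ℝ)..(π/2), u * cos u ^ k) - π * ∫ u in (0:ℝ)..(π/2), cos u ^ k := by
  have reflect := intervalIntegral.integral_comp_sub_left
    (a := (0:ℝ)) (b := π/2) (fun u => u * cos u ^ k) π
  rw [show π - π/2 = π/2 by ring, sub_zero] at reflect
  rw [← reflect, ← intervalIntegral.integral_const_mul, ← intervalIntegral.integral_sub
    (by apply Continuous.intervalIntegrable; fun_prop)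
    (by apply Continuous.intervalIntegrable; fun_prop)]
  congr 1 with u
  rw [cos_pi_sub, hk.neg_pow]
  ring

theorem stmt_11 (k : ℕ) (hk : Odd k) :
    ∫ x in (0:ℝ)..(π/2), x * cos (2*x) ^ k =
      (1/2) * (∫ x in (0:ℝ)..(π/2), x * cos x ^ k) -
        (((k - 1)‼ : ℝ) / (k‼ : ℝ)) * (π/4) := by
  have hI : ∀ a b : ℝ, IntervalIntegrable (fun u => u * cos u ^ k) MeasureTheory.volume a b :=
    fun _ _ => by apply Continuous.intervalIntegrable; fun_prop
  rw [intervalIntegral.integral_mul_comp_mul_left (fun u => cos u ^ k) two_ne_zero,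
    mul_zero, mul_div_cancel₀ π two_ne_zero,
    ← intervalIntegral.integral_add_adjacent_intervals (b := π/2) (hI _ _) (hI _ _),
    integral_mul_cos_pow_odd_pi_div_two_pi hk]
  obtain ⟨n, rfl⟩ := hk
  rw [integral_cos_pow_odd_eq_doubleFactorial, Nat.add_sub_cancel]
  ring
end

section
/- For every even natural number k ≥ 2, I_k = ∫₀^{π/2} x·cos^k(x) dx = J_k − ((k−1)!!/(4·k!!)) · ∑_{j=1}^{k/2} (1/j²)·((2j)!!/(2j−1)!!), where J_k = ∫₀^{π/2} x·cos^k(2x) dx. -/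
/-!
Differentiating `x cos^{n+1} x sin x + cos^{n+2} x / (n+2)` gives the recurrence
`(n+2) I_{n+2} = (n+1) I_n - 1/(n+2)`; multiplied by `(2m)‼/(2m-1)‼` it telescopes to
`I_{2m} = (2m-1)‼/(2m)‼ · (π²/8 - S_m/4)`, with `S_m` the sum in the statement.
On the other side `x ↦ cos^{2m}(2x)` is symmetric about `π/4`, so `J_{2m}` is `π/4` times
`∫₀^{π/2} cos^{2m}(2x) dx = ½ ∫₀^π cos^{2m} = π/2 · (2m-1)‼/(2m)‼` (Wallis).
-/

open Real Nat intervalIntegral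

lemma Nat.doubleFactorial_two_mul_add_one (m : ℕ) : (2 * m + 1)‼ = (2 * m + 1) * (2 * m - 1)‼ := by
  simpa using Nat.doubleFactorial_add_one (2 * m)

lemma integral_cos_pow_two_mul_of_sin_mul_cos_eq_zero {b : ℝ} (hb : sin b * cos b = 0) (m : ℕ) :
    ∫ x in (0:ℝ)..b, cos x ^ (2 * m) = b * ((2 * m - 1)‼ / (2 * m)‼ : ℝ) := by
  induction m with
  | zero => simp
  | succ m ih =>
    have hboundary : cos b ^ (2 * m + 1) * sin b = 0 := by
      rw [pow_succ, mul_assoc, mul_comm (cos b), hb, mul_zero]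
    rw [mul_add_one, integral_cos_pow, ih, hboundary, Nat.doubleFactorial_add_two,
      (by omega : 2 * m + 2 - 1 = 2 * m + 1), Nat.doubleFactorial_two_mul_add_one]
    have : ((2 * m)‼ : ℝ) ≠ 0 := by positivity
    simp only [cos_zero, sin_zero, one_pow, mul_zero, sub_self, zero_div, zero_add]
    push_cast
    field_simp

lemma integral_id_mul_of_comp_sub_eq {g : ℝ → ℝ} {a : ℝ} (hg : ∀ x, g (a - x) = g x)
    (hint : IntervalIntegrable g MeasureTheory.volume 0 a) :
    ∫ x in (0:ℝ)..a, x * g x = a / 2 * ∫ x in (0:ℝ)..a, g x := by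
  have hreflect : ∫ x in (0:ℝ)..a, x * g x = ∫ x in (0:ℝ)..a, (a - x) * g x := by
    simpa [hg] using (integral_comp_sub_left (fun x => x * g x) a (a := 0) (b := a)).symm
  have hxg : IntervalIntegrable (fun x => x * g x) MeasureTheory.volume 0 a :=
    hint.continuousOn_mul continuousOn_id
  simp only [sub_mul] at hreflect
  rw [integral_sub (hint.const_mul a) hxg, integral_const_mul] at hreflect
  linarith

lemma integral_id_mul_cos_two_mul_pow_two_mul (m : ℕ) :
    ∫ x in (0:ℝ)..(π/2), x * cos (2 * x) ^ (2 * m) = π ^ 2 / 8 * ((2 * m - 1)‼ / (2 * m)‼ : ℝ) := by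
  have hsymm (x : ℝ) : cos (2 * (π / 2 - x)) ^ (2 * m) = cos (2 * x) ^ (2 * m) := by
    rw [(by ring : 2 * (π / 2 - x) = π - 2 * x), cos_pi_sub, Even.neg_pow (even_two_mul m)]
  have hhalf : ∫ x in (0:ℝ)..(π/2), cos (2 * x) ^ (2 * m) = π / 2 * ((2 * m - 1)‼ / (2 * m)‼ : ℝ) := by
    rw [integral_comp_mul_left (fun x => cos x ^ (2 * m)) two_ne_zero, mul_zero,
      mul_div_cancel₀ π two_ne_zero,
      integral_cos_pow_two_mul_of_sin_mul_cos_eq_zero (by simp) m, smul_eq_mul]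
    ring
  rw [integral_id_mul_of_comp_sub_eq hsymm (by apply Continuous.intervalIntegrable; fun_prop), hhalf]
  ring

lemma hasDerivAt_id_mul_cos_pow_mul_sin_add_cos_pow_div (n : ℕ) (x : ℝ) :
    HasDerivAt (fun y => y * cos y ^ (n + 1) * sin y + cos y ^ (n + 2) / (n + 2))
      ((n + 2) * (x * cos x ^ (n + 2)) - (n + 1) * (x * cos x ^ n)) x := by
  have hcos_pow (p : ℕ) : HasDerivAt (fun y => cos y ^ (p + 1)) ((p + 1) * cos x ^ p * -sin x) x := by
    simpa using (hasDerivAt_cos x).fun_pow (p + 1)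
  refine ((((hasDerivAt_id x).mul (hcos_pow n)).mul (hasDerivAt_sin x)).add
    ((hcos_pow (n + 1)).div_const (n + 2))).congr_deriv ?_
  simp only [Pi.mul_apply, id]
  have : (n : ℝ) + 2 ≠ 0 := by positivity
  field_simp
  push_cast
  linear_combination -(n + 2) * (n + 1) * x * cos x ^ n * sin_sq_add_cos_sq x

lemma integral_id_mul_cos_pow_add_two (n : ℕ) :
    (n + 2) * ∫ x in (0:ℝ)..(π/2), x * cos x ^ (n + 2) =
      (n + 1) * (∫ x in (0:ℝ)..(π/2), x * cos x ^ n) - 1 / (n + 2) := by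
  have hFTC := integral_eq_sub_of_hasDerivAt (a := 0) (b := π / 2)
    (fun x _ => hasDerivAt_id_mul_cos_pow_mul_sin_add_cos_pow_div n x)
    (by apply Continuous.intervalIntegrable; fun_prop)
  rw [integral_sub (by apply Continuous.intervalIntegrable; fun_prop)
    (by apply Continuous.intervalIntegrable; fun_prop), integral_const_mul,
    integral_const_mul] at hFTC
  linarith [hFTC.trans (by simp : _ = -(1 / ((n : ℝ) + 2)))]

lemma integral_id_mul_cos_pow_two_mul (m : ℕ) :
    ∫ x in (0:ℝ)..(π/2), x * cos x ^ (2 * m) = ((2 * m - 1)‼ / (2 * m)‼ : ℝ) *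
      (π ^ 2 / 8 - 1 / 4 * ∑ j ∈ Finset.Icc 1 m, 1 / (j : ℝ) ^ 2 * ((2 * j)‼ / (2 * j - 1)‼ : ℝ)) := by
  induction m with
  | zero => norm_num [integral_id, div_pow, div_div]
  | succ m ih =>
    have hrec := integral_id_mul_cos_pow_add_two (2 * m)
    rw [ih] at hrec
    rw [Finset.sum_Icc_succ_top (by omega), mul_add_one, (by omega : 2 * m + 2 - 1 = 2 * m + 1),
      Nat.doubleFactorial_add_two, Nat.doubleFactorial_two_mul_add_one]
    have : ((2 * m - 1)‼ : ℝ) ≠ 0 := by positivity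
    have : ((2 * m)‼ : ℝ) ≠ 0 := by positivity
    push_cast at hrec ⊢
    field_simp at hrec ⊢
    linear_combination hrec / 2

theorem stmt_12_general (k : ℕ) (hk : Even k) :
    ∫ x in (0:ℝ)..(π/2), x * cos x ^ k =
      (∫ x in (0:ℝ)..(π/2), x * cos (2*x) ^ k) -
      (((k - 1)‼ : ℝ) / (4 * (k‼ : ℝ))) *
        ∑ j ∈ Finset.Icc 1 (k/2), (1 / (j:ℝ)^2) * (((2*j)‼ : ℝ) / ((2*j - 1)‼ : ℝ)) := by
  obtain ⟨m, rfl⟩ := hk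
  rw [← two_mul, integral_id_mul_cos_pow_two_mul, integral_id_mul_cos_two_mul_pow_two_mul,
    Nat.mul_div_cancel_left m two_pos]
  ring

theorem stmt_12 (k : ℕ) (hk : Even k) (hk2 : 2 ≤ k) :
    ∫ x in (0:ℝ)..(π/2), x * cos x ^ k =
      (∫ x in (0:ℝ)..(π/2), x * cos (2*x) ^ k) -
      (((k - 1)‼ : ℝ) / (4 * (k‼ : ℝ))) *
        ∑ j ∈ Finset.Icc 1 (k/2), (1 / (j:ℝ)^2) * (((2*j)‼ : ℝ) / ((2*j - 1)‼ : ℝ)) :=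
  stmt_12_general k hk
end

section
/- For every real number x with |x| < 1, the series ∑_{n=0}^{∞} J_{2n}·x^n converges and 1/√(1−x) = (8/π²) · ∑_{n=0}^{∞} J_{2n}·x^n, where J_{2n} = ∫₀^{π/2} t·cos^{2n}(2t) dt. -/
/-!
Summing the geometric series under the integral sign gives
`∑ J_{2n} x^n = ∫₀^{π/2} t / (1 - x cos² 2t) dt`. The weight `1 / (1 - x cos² 2t)` is symmetric
under `t ↦ π/2 - t`, so the factor `t` may be replaced by its mean `π/4`; the remaining integral
is `½ ∫₀^π du / ((1 - x) cos² u + sin² u) = π / (2 √(1 - x))`.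
-/

open Real MeasureTheory

theorem intervalIntegral.integral_id_mul_of_symm {g : ℝ → ℝ} {a b : ℝ}
    (hg : IntervalIntegrable g volume a b) (hsymm : ∀ t, g (a + b - t) = g t) :
    ∫ t in a..b, t * g t = (a + b) / 2 * ∫ t in a..b, g t := by
  have hreflect : ∫ t in a..b, (a + b - t) * g t = ∫ t in a..b, t * g t := by
    simpa [hsymm] using
      intervalIntegral.integral_comp_sub_left (a := a) (b := b) (fun t => t * g t) (a + b)
  have hsplit : ∫ t in a..b, (a + b - t) * g t
      = (a + b) * (∫ t in a..b, g t) - ∫ t in a..b, t * g t := by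
    have hid : IntervalIntegrable (fun t => t * g t) volume a b :=
      hg.continuousOn_mul continuousOn_id
    simp_rw [sub_mul]
    rw [intervalIntegral.integral_sub (hg.const_mul _) hid,
      intervalIntegral.integral_const_mul]
  linarith

theorem mul_cos_sq_add_sin_sq_pos {a : ℝ} (ha : 0 < a) (u : ℝ) :
    0 < a * cos u ^ 2 + sin u ^ 2 := by
  rcases (sq_nonneg (cos u)).eq_or_lt with hcos | hcos
  · nlinarith [sin_sq_add_cos_sq u]
  · nlinarith [mul_pos ha hcos, sq_nonneg (sin u)]

/- Up to a locally constant multiple of `π / a`, this antiderivative is `arctan (tan u / a) / a`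
(by the subtraction formula for `arctan`); unlike the latter it is continuous on all of `ℝ`. -/
theorem hasDerivAt_add_arctan_div {a : ℝ} (ha : 0 < a) (u : ℝ) :
    HasDerivAt (fun u => (u + arctan ((1 - a) * sin u * cos u / (a * cos u ^ 2 + sin u ^ 2))) / a)
      (a ^ 2 * cos u ^ 2 + sin u ^ 2)⁻¹ u := by
  have hpos := mul_cos_sq_add_sin_sq_pos ha u
  have hpos_sq := mul_cos_sq_add_sin_sq_pos (pow_pos ha 2) u
  have hnum : HasDerivAt (fun u => (1 - a) * sin u * cos u)
      ((1 - a) * cos u * cos u + (1 - a) * sin u * -sin u) u :=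
    ((hasDerivAt_sin u).const_mul (1 - a)).mul (hasDerivAt_cos u)
  have hden : HasDerivAt (fun u => a * cos u ^ 2 + sin u ^ 2)
      (a * (2 * cos u ^ 1 * -sin u) + 2 * sin u ^ 1 * cos u) u :=
    (((hasDerivAt_cos u).pow 2).const_mul a).add ((hasDerivAt_sin u).pow 2)
  refine (((hasDerivAt_id u).add (hnum.div hden hpos.ne').arctan).div_const a).congr_deriv ?_
  simp only [Pi.div_apply]
  field_simp
  rw [show sin u ^ 2 = 1 - cos u ^ 2 by linarith [sin_sq_add_cos_sq u]]
  ring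

theorem integral_inv_sq_mul_cos_sq_add_sin_sq {a : ℝ} (ha : 0 < a) :
    ∫ u in (0:ℝ)..π, (a ^ 2 * cos u ^ 2 + sin u ^ 2)⁻¹ = π / a := by
  have hcont : Continuous fun u : ℝ => (a ^ 2 * cos u ^ 2 + sin u ^ 2)⁻¹ :=
    (by fun_prop : Continuous _).inv₀ fun u => (mul_cos_sq_add_sin_sq_pos (pow_pos ha 2) u).ne'
  rw [intervalIntegral.integral_eq_sub_of_hasDerivAt (fun u _ => hasDerivAt_add_arctan_div ha u)
    (hcont.intervalIntegrable 0 π)]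
  simp

theorem one_sub_mul_cos_sq_pos {x : ℝ} (hx : x < 1) (u : ℝ) : 0 < 1 - x * cos u ^ 2 := by
  rcases le_or_gt x 0 with hx0 | hx0
  · nlinarith [sq_nonneg (cos u)]
  · nlinarith [cos_sq_le_one u]

theorem integral_inv_one_sub_mul_cos_sq {x : ℝ} (hx : x < 1) :
    ∫ u in (0:ℝ)..π, (1 - x * cos u ^ 2)⁻¹ = π / √(1 - x) := by
  have hsqrt : √(1 - x) ^ 2 = 1 - x := sq_sqrt (by linarith)
  rw [← integral_inv_sq_mul_cos_sq_add_sin_sq (sqrt_pos.mpr (by linarith))]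
  congr! 3 with u
  linear_combination (-cos u ^ 2) * hsqrt - sin_sq_add_cos_sq u

theorem integral_inv_one_sub_mul_cos_two_mul_sq {x : ℝ} (hx : x < 1) :
    ∫ t in (0:ℝ)..π / 2, (1 - x * cos (2 * t) ^ 2)⁻¹ = π / (2 * √(1 - x)) := by
  rw [intervalIntegral.integral_comp_mul_left (fun u => (1 - x * cos u ^ 2)⁻¹) two_ne_zero,
    mul_zero, mul_div_cancel₀ π two_ne_zero, integral_inv_one_sub_mul_cos_sq hx, smul_eq_mul]
  ring

theorem integral_mul_inv_one_sub_mul_cos_two_mul_sq {x : ℝ} (hx : x < 1) :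
    ∫ t in (0:ℝ)..π / 2, t * (1 - x * cos (2 * t) ^ 2)⁻¹ = π ^ 2 / (8 * √(1 - x)) := by
  have hcont : Continuous fun t : ℝ => (1 - x * cos (2 * t) ^ 2)⁻¹ :=
    (by fun_prop : Continuous _).inv₀ fun t => (one_sub_mul_cos_sq_pos hx _).ne'
  have hsymm (t : ℝ) : (1 - x * cos (2 * (0 + π / 2 - t)) ^ 2)⁻¹ = (1 - x * cos (2 * t) ^ 2)⁻¹ := by
    rw [show 2 * (0 + π / 2 - t) = π - 2 * t by ring, cos_pi_sub, neg_sq]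
  rw [intervalIntegral.integral_id_mul_of_symm (hcont.intervalIntegrable 0 (π / 2)) hsymm,
    integral_inv_one_sub_mul_cos_two_mul_sq hx]
  field_simp
  ring

theorem hasSum_intervalIntegral_mul_pow_mul_pow {f c : ℝ → ℝ} {a b x : ℝ}
    (hf : IntervalIntegrable f volume a b) (hc : Continuous c) (hc1 : ∀ t, |c t| ≤ 1)
    (hx : |x| < 1) :
    HasSum (fun n : ℕ => (∫ t in a..b, f t * c t ^ n) * x ^ n)
      (∫ t in a..b, f t * (1 - x * c t)⁻¹) := by
  have hgeom : ∀ t, HasSum (fun n : ℕ => |f t| * |x| ^ n) (|f t| * (1 - |x|)⁻¹) :=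
    fun t => (hasSum_geometric_of_lt_one (abs_nonneg x) hx).mul_left _
  simp_rw [← intervalIntegral.integral_mul_const]
  refine intervalIntegral.hasSum_integral_of_dominated_convergence (fun n t => |f t| * |x| ^ n)
    (fun n => ?_) (fun n => ae_of_all _ fun t _ => ?_) (ae_of_all _ fun t _ => (hgeom t).summable)
    ?_ (ae_of_all _ fun t _ => ?_)
  · exact ((hf.def'.aestronglyMeasurable).mul (hc.pow n).aestronglyMeasurable).mul_const _
  · rw [norm_mul, norm_mul, norm_pow, norm_pow, Real.norm_eq_abs, Real.norm_eq_abs,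
      Real.norm_eq_abs, mul_assoc]
    exact mul_le_mul_of_nonneg_left
      (mul_le_of_le_one_left (by positivity) (pow_le_one₀ (abs_nonneg _) (hc1 t))) (abs_nonneg _)
  · simp_rw [fun t => (hgeom t).tsum_eq]
    exact hf.abs.mul_const _
  · have hxc : |x * c t| < 1 := by
      rw [abs_mul]; exact lt_of_le_of_lt (mul_le_of_le_one_right (abs_nonneg x) (hc1 t)) hx
    simpa [mul_pow, mul_assoc, mul_comm (x ^ _)] using
      (hasSum_geometric_of_abs_lt_one hxc).mul_left (f t)

theorem stmt_15 (x : ℝ) (hx : |x| < 1) :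
    Summable (fun n : ℕ => (∫ t in (0:ℝ)..(π/2), t * cos (2*t) ^ (2*n)) * x^n) ∧
    1 / Real.sqrt (1 - x) =
      (8 / π^2) * ∑' n : ℕ, (∫ t in (0:ℝ)..(π/2), t * cos (2*t) ^ (2*n)) * x^n := by
  have hcos (t : ℝ) : |cos (2 * t) ^ 2| ≤ 1 := by
    rw [abs_of_nonneg (sq_nonneg _)]
    exact cos_sq_le_one _
  have hsum := hasSum_intervalIntegral_mul_pow_mul_pow
    (continuous_id.intervalIntegrable (μ := volume) 0 (π / 2)) (by fun_prop) hcos hx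
  simp only [id, ← pow_mul] at hsum
  rw [integral_mul_inv_one_sub_mul_cos_two_mul_sq (lt_of_abs_lt hx)] at hsum
  refine ⟨hsum.summable, ?_⟩
  rw [hsum.tsum_eq]
  field_simp
end

section
/- For every real number x with |x| < 1, the series ∑_{n=0}^{∞} W_{2n}·x^n converges and 1/√(1−x) = (2/π) · ∑_{n=0}^{∞} W_{2n}·x^n, where W_{2n} = ∫₀^{π/2} cos^{2n}(t) dt is the Wallis integral. -/
/-!
The Wallis recursion `W (k + 2) = (k + 1) / (k + 2) * W k` is also the ratio of consecutive
coefficients `binom(n - 1/2, n)` of the binomial series `(1 - x)^(-1/2) = ∑ binom(n - 1/2, n) xⁿ`,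
so `W (2 n) = π / 2 * binom(n - 1/2, n)` and the identity is that binomial series times `π / 2`.
-/

open Real

theorem Ring.succ_nsmul_choose_succ_succ {R : Type*} [NonAssocRing R] [Pow R ℕ] [NatPowAssoc R]
    [BinomialRing R] (r : R) (k : ℕ) :
    (k + 1) • Ring.choose (r + 1) (k + 1) = (r + 1) * Ring.choose r k := by
  simpa [Nat.choose_one_right] using Ring.choose_smul_choose (r + 1) (Nat.le_add_left 1 k)

theorem hasSum_choose_mul_pow_of_abs_lt_one (a : ℝ) {x : ℝ} (hx : |x| < 1) :
    HasSum (fun n : ℕ => Ring.choose (a + n - 1) n * x ^ n) (1 / (1 - x) ^ a) := by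
  have := (one_div_one_sub_rpow_hasFPowerSeriesOnBall_zero a).hasSum
    (y := x) (by simpa [enorm_eq_nnnorm, ← NNReal.coe_lt_coe] using hx)
  simpa [mul_comm] using this

theorem integral_cos_pow_add_two_zero_pi_div_two (n : ℕ) :
    ∫ t in (0 : ℝ)..π / 2, cos t ^ (n + 2) =
      (n + 1) / (n + 2) * ∫ t in (0 : ℝ)..π / 2, cos t ^ n := by
  simp [integral_cos_pow]

theorem integral_cos_pow_two_mul (n : ℕ) :
    ∫ t in (0 : ℝ)..π / 2, cos t ^ (2 * n) = π / 2 * Ring.choose ((1 / 2 : ℝ) + n - 1) n := by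
  induction n with
  | zero => simp
  | succ n ih =>
    have h := Ring.succ_nsmul_choose_succ_succ ((1 / 2 : ℝ) + n - 1) n
    rw [nsmul_eq_mul] at h
    rw [mul_add, mul_one, integral_cos_pow_add_two_zero_pi_div_two, ih,
      show (1 / 2 : ℝ) + (n + 1 : ℕ) - 1 = 1 / 2 + n - 1 + 1 by push_cast; ring]
    push_cast at h ⊢
    -- otherwise `field_simp` also rewrites the arguments of `Ring.choose`
    generalize Ring.choose ((1 / 2 : ℝ) + n - 1 + 1) (n + 1) = D at h ⊢
    generalize Ring.choose ((1 / 2 : ℝ) + n - 1) n = C at h ⊢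
    field_simp
    linear_combination -2 * h

theorem stmt_16 (x : ℝ) (hx : |x| < 1) :
    Summable (fun n : ℕ => (∫ t in (0:ℝ)..(π/2), cos t ^ (2*n)) * x^n) ∧
    1 / Real.sqrt (1 - x) =
      (2 / π) * ∑' n : ℕ, (∫ t in (0:ℝ)..(π/2), cos t ^ (2*n)) * x^n := by
  have h : HasSum (fun n : ℕ => (∫ t in (0:ℝ)..(π/2), cos t ^ (2*n)) * x^n)
      (π / 2 * (1 / √(1 - x))) := by
    simp_rw [integral_cos_pow_two_mul, mul_assoc, sqrt_eq_rpow]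
    exact (hasSum_choose_mul_pow_of_abs_lt_one (1 / 2) hx).mul_left (π / 2)
  refine ⟨h.summable, ?_⟩
  rw [h.tsum_eq]
  field_simp
end

section
/- For every natural number i ≥ 0, there exist rational numbers α, β, γ such that (1/π)·∫₀^{π/2} x·cos²(x)·(1−cos(x))^{2i} dx = α + β·π + γ/π. -/
/-!
The product formula `cos (a x) cos (b x) = (cos ((a + b) x) + cos ((a - b) x)) / 2` shows that the
`ℚ`-span of the functions `x ↦ cos (m x)`, `m ∈ ℤ`, is a subalgebra; hence it contains every
polynomial in `cos` with rational coefficients, in particular `cos² (1 - cos)^(2i)`. Integrating by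
parts, `∫₀^{π/2} x cos (m x) dx` is `π² / 8` for `m = 0` and otherwise
`(π/2) sin (mπ/2) / m + (cos (mπ/2) - 1) / m²`, where `sin (mπ/2), cos (mπ/2) ∈ {-1, 0, 1}`.
So the integral lies in `ℚ + ℚπ + ℚπ²`, and dividing by `π` gives the claim.
-/

open Real Polynomial Submodule

noncomputable def cosMul (m : ℤ) : ℝ → ℝ := fun x => cos (m * x)

noncomputable def cosSpan : Submodule ℚ (ℝ → ℝ) := span ℚ (Set.range cosMul)

lemma cosMul_mul_cosMul (a b : ℤ) :
    cosMul a * cosMul b = (1 / 2 : ℚ) • (cosMul (a + b) + cosMul (a - b)) := by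
  funext x
  simp only [cosMul, Pi.mul_apply, Pi.smul_apply, Pi.add_apply, Rat.smul_def]
  push_cast
  rw [add_mul, sub_mul, cos_add, cos_sub]
  ring

lemma cosMul_mem_cosSpan (m : ℤ) : cosMul m ∈ cosSpan := subset_span ⟨m, rfl⟩

lemma one_mem_cosSpan : (1 : ℝ → ℝ) ∈ cosSpan := by
  convert cosMul_mem_cosSpan 0
  funext x
  simp [cosMul]

lemma mul_mem_cosSpan {f g : ℝ → ℝ} (hf : f ∈ cosSpan) (hg : g ∈ cosSpan) :
    f * g ∈ cosSpan := by
  have hle : cosSpan * cosSpan ≤ cosSpan := by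
    rw [cosSpan, span_mul_span, span_le]
    rintro _ ⟨_, ⟨a, rfl⟩, _, ⟨b, rfl⟩, rfl⟩
    change cosMul a * cosMul b ∈ _
    rw [cosMul_mul_cosMul]
    exact smul_mem _ _ (add_mem (cosMul_mem_cosSpan _) (cosMul_mem_cosSpan _))
  exact hle (mul_mem_mul hf hg)

noncomputable def cosSubalgebra : Subalgebra ℚ (ℝ → ℝ) :=
  cosSpan.toSubalgebra one_mem_cosSpan fun _ _ => mul_mem_cosSpan

lemma aeval_cos_mem_cosSpan (p : ℚ[X]) : aeval cos p ∈ cosSpan := by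
  have hcos : cos ∈ cosSubalgebra := by
    have : cos = cosMul 1 := by funext x; simp [cosMul]
    exact this ▸ cosMul_mem_cosSpan 1
  exact Algebra.adjoin_le (Set.singleton_subset_iff.2 hcos) (aeval_mem_adjoin_singleton ℚ cos)

lemma exists_int_sin_cos_int_mul_pi_div_two (m : ℤ) :
    ∃ s c : ℤ, sin (m * (π / 2)) = s ∧ cos (m * (π / 2)) = c := by
  induction m using Int.induction_on with
  | zero => exact ⟨0, 1, by simp, by simp⟩
  | succ n ih =>
    obtain ⟨s, c, hs, hc⟩ := ih
    have h : ((n + 1 : ℤ) : ℝ) * (π / 2) = ((n : ℤ) : ℝ) * (π / 2) + π / 2 := by push_cast; ring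
    exact ⟨c, -s, by rw [h, sin_add_pi_div_two, hc], by rw [h, cos_add_pi_div_two, hs, Int.cast_neg]⟩
  | pred n ih =>
    obtain ⟨s, c, hs, hc⟩ := ih
    have h : ((-n - 1 : ℤ) : ℝ) * (π / 2) = ((-n : ℤ) : ℝ) * (π / 2) - π / 2 := by push_cast; ring
    exact ⟨-c, s, by rw [h, sin_sub_pi_div_two, hc, Int.cast_neg], by rw [h, cos_sub_pi_div_two, hs]⟩

lemma integral_mul_cos_mul {c : ℝ} (hc : c ≠ 0) (a b : ℝ) :
    ∫ x in a..b, x * cos (c * x) =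
      (b * sin (c * b) - a * sin (c * a)) / c + (cos (c * b) - cos (c * a)) / c ^ 2 := by
  have hderiv (x : ℝ) : HasDerivAt (fun x => x * sin (c * x) / c + cos (c * x) / c ^ 2)
      (x * cos (c * x)) x := by
    have hsin := ((hasDerivAt_id x).const_mul c).sin
    have hcos := ((hasDerivAt_id x).const_mul c).cos
    refine (((hasDerivAt_id x).mul hsin).div_const c |>.add (hcos.div_const _)).congr_deriv ?_
    field_simp
    simp only [id]
    ring
  rw [intervalIntegral.integral_eq_sub_of_hasDerivAt (fun x _ => hderiv x)
    (by apply Continuous.intervalIntegrable; fun_prop)]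
  ring

lemma integral_mul_cosMul_mem (m : ℤ) :
    ∫ x in (0 : ℝ)..π / 2, x * cosMul m x ∈ span ℚ {1, π, π ^ 2} := by
  rcases eq_or_ne m 0 with rfl | hm
  · have h : ∫ x in (0 : ℝ)..π / 2, x * cosMul 0 x = (1 / 8 : ℚ) • π ^ 2 := by
      simp only [cosMul, Int.cast_zero, zero_mul, cos_zero, mul_one, integral_id, Rat.smul_def]
      push_cast
      ring
    rw [h]
    exact smul_mem _ _ (subset_span (by simp))
  · obtain ⟨s, c, hs, hc⟩ := exists_int_sin_cos_int_mul_pi_div_two m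
    have hm' : (m : ℝ) ≠ 0 := Int.cast_ne_zero.2 hm
    have h : ∫ x in (0 : ℝ)..π / 2, x * cosMul m x =
        ((c - 1) / m ^ 2 : ℚ) • (1 : ℝ) + (s / (2 * m) : ℚ) • π := by
      simp only [cosMul, integral_mul_cos_mul hm', hs, hc, mul_zero, sin_zero, cos_zero, Rat.smul_def]
      push_cast
      field_simp
      ring
    rw [h]
    exact add_mem (smul_mem _ _ (subset_span (by simp))) (smul_mem _ _ (subset_span (by simp)))

lemma integral_mul_mem_of_mem_cosSpan {f : ℝ → ℝ} (hf : f ∈ cosSpan) :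
    Continuous f ∧ ∫ x in (0 : ℝ)..π / 2, x * f x ∈ span ℚ {1, π, π ^ 2} := by
  have hint {g : ℝ → ℝ} (hg : Continuous g) :
      IntervalIntegrable (fun x => x * g x) MeasureTheory.volume 0 (π / 2) :=
    (continuous_id.mul hg).intervalIntegrable _ _
  induction hf using span_induction with
  | mem f hf =>
    obtain ⟨m, rfl⟩ := hf
    exact ⟨by unfold cosMul; fun_prop, integral_mul_cosMul_mem m⟩
  | zero => exact ⟨continuous_zero, by simp⟩
  | add f g _ _ hf hg =>
    refine ⟨hf.1.add hg.1, ?_⟩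
    simp only [Pi.add_apply, mul_add, intervalIntegral.integral_add (hint hf.1) (hint hg.1)]
    exact add_mem hf.2 hg.2
  | smul q f _ hf =>
    refine ⟨hf.1.const_smul q, ?_⟩
    simp only [Pi.smul_apply, mul_smul_comm, intervalIntegral.integral_smul]
    exact smul_mem _ _ hf.2

theorem integral_mul_aeval_cos_mem (p : ℚ[X]) :
    ∫ x in (0 : ℝ)..π / 2, x * aeval (cos x) p ∈ span ℚ {1, π, π ^ 2} := by
  have heval (x : ℝ) : aeval cos p x = aeval (cos x) p :=
    (aeval_algHom_apply (Pi.evalAlgHom ℚ (fun _ : ℝ => ℝ) x) cos p).symm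
  simpa only [heval] using (integral_mul_mem_of_mem_cosSpan (aeval_cos_mem_cosSpan p)).2

lemma exists_rat_eq_of_mem_span {y : ℝ} (hy : y ∈ span ℚ {1, π, π ^ 2}) :
    ∃ a b c : ℚ, y = a + b * π + c * π ^ 2 := by
  obtain ⟨a, z, hz, rfl⟩ := mem_span_insert.1 hy
  obtain ⟨b, w, hw, rfl⟩ := mem_span_insert.1 hz
  obtain ⟨c, rfl⟩ := mem_span_singleton.1 hw
  exact ⟨a, b, c, by simp only [Rat.smul_def]; ring⟩

theorem stmt_19 (i : ℕ) :
    ∃ α β γ : ℚ,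
      (1/π) * ∫ x in (0:ℝ)..(π/2), x * cos x ^ 2 * (1 - cos x) ^ (2*i) =
        (α:ℝ) + (β:ℝ) * π + (γ:ℝ) / π := by
  obtain ⟨a, b, c, h⟩ :=
    exists_rat_eq_of_mem_span (integral_mul_aeval_cos_mem (X ^ 2 * (1 - X) ^ (2 * i)))
  refine ⟨b, c, a, ?_⟩
  simp only [map_mul, map_pow, map_sub, map_one, aeval_X, ← mul_assoc] at h
  rw [h]
  field_simp [pi_ne_zero]
  ring
end
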